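/- For the mixed graphical model with density log f(z,y) = λ(z) + η(z)^T y − (1/2) y^T K(z) y (z binary vector, each K(z) positive definite), the conditional log-odds of Z_j given the remaining variables is an affine function of (Z_{-j}, Y, {Y_γ Y_μ}): log[P(Z_j=1 | Z_{-j}, Y) / P(Z_j=0 | Z_{-j}, Y)] = λ_j + Σ_{k≠j} λ_{jk} Z_k + Σ_γ η_j^γ Y_γ − (1/2) Σ_{γ,μ} Φ_j^{γμ} Y_γ Y_μ. -/
import Mathlib


open Finset

private lemma diff_lin {q : ℕ} (j : Fin q) (z : Fin q → ℝ) (c : Fin q → ℝ) :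
    (∑ k, c k * Function.update z j 1 k) - (∑ k, c k * Function.update z j 0 k) = c j := by
  rw [← Finset.sum_sub_distrib, Finset.sum_eq_single j]
  · simp
  · intro b _ hb
    simp [Function.update_apply, hb]
  · simp

/-- For the simplified mixed graphical model, the conditional log-odds of `Z_j` given the
remaining variables is affine in `(Z_{-j}, Y, {Y_γ Y_μ})`:
`log[P(Z_j=1|rest)/P(Z_j=0|rest)] = λ_j + Σ_{k≠j} λ_{jk} Z_k + Σ_γ η_j^γ Y_γ
  − ½ Σ_{γ,μ} Φ_j^{γμ} Y_γ Y_μ`. -/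
theorem cg_conditional_log_odds (q p : ℕ)
    (l0 : ℝ) (l : Fin q → ℝ) (Λ : Fin q → Fin q → ℝ)
    (hΛsym : ∀ a b, Λ a b = Λ b a)
    (η0 : Fin p → ℝ) (η : Fin q → Fin p → ℝ)
    (Φ0 : Matrix (Fin p) (Fin p) ℝ) (Φ : Fin q → Matrix (Fin p) (Fin p) ℝ)
    (hΦsym : ∀ j, (Φ j).IsSymm)
    (F : (Fin q → ℝ) → (Fin p → ℝ) → ℝ)
    (hF : ∀ z y, F z y = Real.exp
      ((l0 + ∑ j, l j * z j + ∑ j, ∑ k ∈ univ.filter (· < j), Λ j k * z j * z k) +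
        (∑ γ, (η0 γ + ∑ j, η j γ * z j) * y γ) -
        (1 / 2) * ∑ γ, ∑ μ, (Φ0 γ μ + ∑ j, Φ j γ μ * z j) * y γ * y μ))
    (j : Fin q) (z : Fin q → ℝ) (hz : ∀ k, z k = 0 ∨ z k = 1) (y : Fin p → ℝ) :
    Real.log (F (Function.update z j 1) y / F (Function.update z j 0) y) =
      l j + (∑ k ∈ univ.filter (· ≠ j), Λ j k * z k) + (∑ γ, η j γ * y γ) -
        (1 / 2) * ∑ γ, ∑ μ, Φ j γ μ * y γ * y μ := by
  rw [hF, hF, ← Real.exp_sub, Real.log_exp]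
  have d1 : (∑ k, l k * Function.update z j 1 k) - (∑ k, l k * Function.update z j 0 k)
      = l j := diff_lin j z l
  have d3 : (∑ γ, (η0 γ + ∑ k, η k γ * Function.update z j 1 k) * y γ)
      - (∑ γ, (η0 γ + ∑ k, η k γ * Function.update z j 0 k) * y γ) = ∑ γ, η j γ * y γ := by
    rw [← Finset.sum_sub_distrib]
    refine Finset.sum_congr rfl fun γ _ => ?_
    have h := diff_lin j z (fun k => η k γ)
    linear_combination y γ * h
  have d4 : (∑ γ, ∑ μ, (Φ0 γ μ + ∑ k, Φ k γ μ * Function.update z j 1 k) * y γ * y μ)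
      - (∑ γ, ∑ μ, (Φ0 γ μ + ∑ k, Φ k γ μ * Function.update z j 0 k) * y γ * y μ)
      = ∑ γ, ∑ μ, Φ j γ μ * y γ * y μ := by
    rw [← Finset.sum_sub_distrib]
    refine Finset.sum_congr rfl fun γ _ => ?_
    rw [← Finset.sum_sub_distrib]
    refine Finset.sum_congr rfl fun μ _ => ?_
    have h := diff_lin j z (fun k => Φ k γ μ)
    linear_combination y γ * y μ * h
  have d2 : (∑ a, ∑ b ∈ univ.filter (· < a),
        Λ a b * Function.update z j 1 a * Function.update z j 1 b)
      - (∑ a, ∑ b ∈ univ.filter (· < a),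
        Λ a b * Function.update z j 0 a * Function.update z j 0 b)
      = ∑ k ∈ univ.filter (· ≠ j), Λ j k * z k := by
    rw [← Finset.sum_sub_distrib]
    have step : ∀ a : Fin q, ((∑ b ∈ univ.filter (· < a),
          Λ a b * Function.update z j 1 a * Function.update z j 1 b)
        - ∑ b ∈ univ.filter (· < a),
          Λ a b * Function.update z j 0 a * Function.update z j 0 b)
        = (if a = j then ∑ b ∈ univ.filter (· < j), Λ j b * z b else 0)
          + (if j < a then Λ a j * z a else 0) := by
      intro a
      rw [← Finset.sum_sub_distrib]
      rcases eq_or_ne a j with rfl | haj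
      · rw [if_pos rfl, if_neg (lt_irrefl a), add_zero]
        refine Finset.sum_congr rfl fun b hb => ?_
        have hb' : b < a := by simpa using hb
        have hbne : b ≠ a := ne_of_lt hb'
        rw [Function.update_self, Function.update_self,
          Function.update_of_ne hbne, Function.update_of_ne hbne]
        ring
      · rw [if_neg haj, zero_add]
        have hu1a : Function.update z j 1 a = z a := Function.update_of_ne haj _ _
        have hu0a : Function.update z j 0 a = z a := Function.update_of_ne haj _ _
        have key : (∑ b ∈ univ.filter (· < a),
            (Λ a b * Function.update z j 1 a * Function.update z j 1 b
              - Λ a b * Function.update z j 0 a * Function.update z j 0 b))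
            = ∑ b ∈ univ.filter (· < a), (if b = j then Λ a j * z a else 0) := by
          refine Finset.sum_congr rfl fun b _ => ?_
          rcases eq_or_ne b j with rfl | hbj
          · rw [if_pos rfl, hu1a, hu0a, Function.update_self, Function.update_self]
            ring
          · rw [if_neg hbj, hu1a, hu0a,
              Function.update_of_ne hbj, Function.update_of_ne hbj]
            ring
        rw [key, Finset.sum_ite_eq' (univ.filter (· < a)) j (fun _ => Λ a j * z a)]
        simp
    calc (∑ a, ((∑ b ∈ univ.filter (· < a),
            Λ a b * Function.update z j 1 a * Function.update z j 1 b)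
          - ∑ b ∈ univ.filter (· < a),
            Λ a b * Function.update z j 0 a * Function.update z j 0 b))
        = ∑ a, ((if a = j then ∑ b ∈ univ.filter (· < j), Λ j b * z b else 0)
            + (if j < a then Λ a j * z a else 0)) := Finset.sum_congr rfl fun a _ => step a
      _ = (∑ b ∈ univ.filter (· < j), Λ j b * z b)
            + ∑ a ∈ univ.filter (j < ·), Λ a j * z a := by
          rw [Finset.sum_add_distrib]
          congr 1
          · rw [Finset.sum_ite_eq' univ j]
            simp
          · rw [Finset.sum_filter]
      _ = ∑ k ∈ univ.filter (· ≠ j), Λ j k * z k := by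
          have hsplit : (univ : Finset (Fin q)).filter (· ≠ j)
              = univ.filter (· < j) ∪ univ.filter (j < ·) := by
            ext k
            simp only [mem_filter, mem_union, mem_univ, true_and]
            constructor
            · exact fun h => lt_or_gt_of_ne h
            · rintro (h | h)
              · exact ne_of_lt h
              · exact ne_of_gt h
          rw [hsplit, Finset.sum_union]
          · congr 1
            refine Finset.sum_congr rfl fun a _ => ?_
            rw [hΛsym a j]
          · rw [Finset.disjoint_filter]
            intro k _ h1 h2
            exact absurd h2 (not_lt_of_gt h1)
  linarith [d1, d2, d3, d4]
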